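/- arXiv:2410.10165 — 2 statements merged into one kernel-verified Lean document; each statement's English description precedes it below -/
import Mathlib

section
/- Let u ∈ ℝ^n have strictly positive entries, split as û ∈ ℝ^r (entries indexed by R) and ū ∈ ℝ^{n−r} (entries indexed by [n]∖R), with α̂ = Σ û_i, ᾱ = Σ ū_i, α = α̂ + ᾱ. Let V ∈ ℝ^{n×d} split correspondingly into V̂ and V̄. Then ‖α^{-1}(û V̂ + ū V̄) − α̂^{-1} û V̂‖_∞ ≤ (2ᾱ/α)·‖V‖_∞. -/
open Finset

/-- General error bound for softmax attention with index set: for `u` with positive entries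
split along `R` and its complement, with `α̂ = ∑_{i∈R} u_i`, `ᾱ = ∑_{i∉R} u_i`,
`α = α̂ + ᾱ`, one has `‖α⁻¹ u V − α̂⁻¹ û V̂‖_∞ ≤ (2ᾱ/α)·‖V‖_∞`. -/
theorem softmax_general_error_bound
    {n d : ℕ} (u : Fin n → ℝ) (hu : ∀ i, 0 < u i)
    (R : Finset (Fin n)) (V : Fin n → Fin d → ℝ) :
    ∀ j : Fin d,
      |(∑ i, u i)⁻¹ * (∑ i, u i * V i j) - (∑ i ∈ R, u i)⁻¹ * (∑ i ∈ R, u i * V i j)|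
        ≤ 2 * (∑ i ∈ Rᶜ, u i) / (∑ i, u i) * (⨆ p : Fin n × Fin d, |V p.1 p.2|) := by
  intro j
  set M := ⨆ p : Fin n × Fin d, |V p.1 p.2| with hMdef
  rcases isEmpty_or_nonempty (Fin n) with h | h
  · have hR : R = ∅ := Finset.eq_empty_of_isEmpty R
    simp [hR]
  · obtain ⟨i0⟩ := h
    have hbdd : BddAbove (Set.range fun p : Fin n × Fin d => |V p.1 p.2|) :=
      Set.Finite.bddAbove (Set.finite_range _)
    have hM : ∀ i (j' : Fin d), |V i j'| ≤ M := fun i j' => le_ciSup hbdd (i, j')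
    have hM0 : 0 ≤ M := le_trans (abs_nonneg _) (hM i0 j)
    have key : ∀ s : Finset (Fin n), |∑ i ∈ s, u i * V i j| ≤ (∑ i ∈ s, u i) * M := by
      intro s
      calc |∑ i ∈ s, u i * V i j| ≤ ∑ i ∈ s, |u i * V i j| := Finset.abs_sum_le_sum_abs _ _
        _ ≤ ∑ i ∈ s, u i * M := Finset.sum_le_sum fun i _ => by
            rw [abs_mul, abs_of_pos (hu i)]
            exact mul_le_mul_of_nonneg_left (hM i j) (hu i).le
        _ = (∑ i ∈ s, u i) * M := (Finset.sum_mul _ _ _).symm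
    set A := ∑ i ∈ R, u i with hAdef
    set B := ∑ i ∈ Rᶜ, u i with hBdef
    set S := ∑ i ∈ R, u i * V i j with hSdef
    set T := ∑ i ∈ Rᶜ, u i * V i j with hTdef
    have hsplit : (∑ i, u i) = A + B := (Finset.sum_add_sum_compl R u).symm
    have hsplit2 : (∑ i, u i * V i j) = S + T :=
      (Finset.sum_add_sum_compl R _).symm
    have hB0 : 0 ≤ B := Finset.sum_nonneg fun i _ => (hu i).le
    have hA0 : 0 ≤ A := Finset.sum_nonneg fun i _ => (hu i).le
    have hα : 0 < A + B := by
      rw [← hsplit]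
      exact Finset.sum_pos (fun i _ => hu i) ⟨i0, Finset.mem_univ i0⟩
    rw [hsplit, hsplit2]
    rcases eq_or_lt_of_le hA0 with hA | hA
    · -- R is empty (A = 0)
      have hR : R = ∅ := by
        by_contra hne
        obtain ⟨i, hi⟩ := Finset.nonempty_iff_ne_empty.mpr hne
        exact absurd (Finset.sum_pos (fun i _ => hu i) ⟨i, hi⟩) (by rw [← hAdef, ← hA]; simp)
      have hS : S = 0 := by rw [hSdef, hR]; simp
      have hA' : A = 0 := hA.symm
      rw [hS, hA']
      have hBpos : 0 < B := by rw [hA', zero_add] at hα; exact hα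
      have : |(0 + B)⁻¹ * (0 + T) - 0⁻¹ * 0| = B⁻¹ * |T| := by
        rw [inv_zero, zero_mul, sub_zero, zero_add, zero_add, abs_mul,
          abs_of_pos (inv_pos.mpr hBpos)]
      rw [this]
      have hT : |T| ≤ B * M := key Rᶜ
      calc B⁻¹ * |T| ≤ B⁻¹ * (B * M) :=
            mul_le_mul_of_nonneg_left hT (inv_pos.mpr hBpos).le
        _ = M := by field_simp
        _ ≤ 2 * B / (0 + B) * M := by
            rw [zero_add, mul_div_assoc, div_self hBpos.ne', mul_one]
            linarith
    · -- R nonempty (A > 0)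
      have eq1 : (A + B)⁻¹ * (S + T) - A⁻¹ * S
          = (A + B)⁻¹ * T - B / ((A + B) * A) * S := by
        field_simp
        ring
      rw [eq1]
      have h1 : |(A + B)⁻¹ * T - B / ((A + B) * A) * S|
          ≤ (A + B)⁻¹ * |T| + B / ((A + B) * A) * |S| := by
        calc |(A + B)⁻¹ * T - B / ((A + B) * A) * S|
            ≤ |(A + B)⁻¹ * T| + |B / ((A + B) * A) * S| := abs_sub _ _
          _ = (A + B)⁻¹ * |T| + B / ((A + B) * A) * |S| := by
              rw [abs_mul, abs_mul, abs_of_pos (inv_pos.mpr hα),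
                abs_of_nonneg (div_nonneg hB0 (mul_pos hα hA).le)]
      refine h1.trans ?_
      have hT : |T| ≤ B * M := key Rᶜ
      have hS : |S| ≤ A * M := key R
      have h2 : (A + B)⁻¹ * |T| + B / ((A + B) * A) * |S|
          ≤ (A + B)⁻¹ * (B * M) + B / ((A + B) * A) * (A * M) := by
        gcongr
      refine h2.trans ?_
      have : (A + B)⁻¹ * (B * M) + B / ((A + B) * A) * (A * M) = 2 * B / (A + B) * M := by
        field_simp
        ring
      rw [this]
end

section
/- Suppose (q, K) has the (γ, β₁, β₂) massive activation property, R = NN(n^γ, q, K) is the top-n^γ index set, and Attn_s(q,K,V) = α^{-1}Σ_i exp(⟨q,K_i⟩)V_i with the restricted attention Âttn_s(q,K,V) = α̂^{-1}Σ_{i∈R} exp(⟨q,K_i⟩)V_i. Then ‖Âttn_s(q,K,V) − Attn_s(q,K,V)‖_∞ ≤ 2‖V‖_∞ / n^{γ + (β₁−β₂)‖q‖₂ − 1}. -/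
open Finset
open scoped RealInnerProductSpace

set_option maxHeartbeats 1000000 in
/-- Error analysis of softmax attention with top-`n^γ` index set under the
`(γ, β₁, β₂)` massive activation property:
`‖Âttn_s(q,K,V) − Attn_s(q,K,V)‖_∞ ≤ 2‖V‖_∞ / n^{γ + (β₁−β₂)‖q‖₂ − 1}`. -/
theorem softmax_attention_error_massive_activation
    {n d : ℕ} (γ β₁ β₂ : ℝ) (hγ : γ ∈ Set.Icc (0 : ℝ) 1)
    (hβ : β₂ ≤ β₁) (hβ₂ : 0 ≤ β₂)
    (q : EuclideanSpace ℝ (Fin d)) (K : Fin n → EuclideanSpace ℝ (Fin d))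
    (V : Fin n → Fin d → ℝ)
    (R : Finset (Fin n)) (hR : (R.card : ℝ) = (n : ℝ) ^ γ)
    (h1 : β₁ * Real.log n ≤ ((n : ℝ) ^ γ * ‖q‖)⁻¹ * ∑ i ∈ R, ⟪q, K i⟫)
    (h2 : ∀ i ∉ R, ⟪q, K i⟫ / ‖q‖ ≤ β₂ * Real.log n) :
    ∀ j : Fin d,
      |(∑ i ∈ R, Real.exp ⟪q, K i⟫)⁻¹ * (∑ i ∈ R, Real.exp ⟪q, K i⟫ * V i j)
          - (∑ i, Real.exp ⟪q, K i⟫)⁻¹ * (∑ i, Real.exp ⟪q, K i⟫ * V i j)|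
        ≤ 2 * (⨆ p : Fin n × Fin d, |V p.1 p.2|)
            / (n : ℝ) ^ (γ + (β₁ - β₂) * ‖q‖ - 1) := by
  intro j
  rcases Nat.eq_zero_or_pos n with hn | hn
  · subst hn
    have hRe : R = ∅ := Finset.eq_empty_of_isEmpty R
    have hM : (⨆ p : Fin 0 × Fin d, |V p.1 p.2|) = 0 := Real.iSup_of_isEmpty _
    simp [hRe, hM]
  -- Main case: n ≥ 1
  have hn0 : (0 : ℝ) < n := by exact_mod_cast hn
  set M := ⨆ p : Fin n × Fin d, |V p.1 p.2| with hMdef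
  have hbdd : BddAbove (Set.range fun p : Fin n × Fin d => |V p.1 p.2|) :=
    Set.Finite.bddAbove (Set.finite_range _)
  have hV : ∀ i jj, |V i jj| ≤ M := fun i jj => le_ciSup hbdd (i, jj)
  have hM0 : 0 ≤ M := le_trans (abs_nonneg _) (hV ⟨0, hn⟩ j)
  have hc : (0 : ℝ) < (n : ℝ) ^ γ := Real.rpow_pos_of_pos hn0 γ
  have hcardpos : (0 : ℝ) < (R.card : ℝ) := by rw [hR]; exact hc
  have hcardne : (R.card : ℝ) ≠ 0 := ne_of_gt hcardpos
  have hRne : R.Nonempty := Finset.card_pos.mp (by exact_mod_cast hcardpos)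
  set A := ∑ i ∈ R, Real.exp ⟪q, K i⟫ with hAdef
  set B := ∑ i ∈ Rᶜ, Real.exp ⟪q, K i⟫ with hBdef
  have hApos : 0 < A := Finset.sum_pos (fun i _ => Real.exp_pos _) hRne
  have hB0 : 0 ≤ B := Finset.sum_nonneg fun i _ => (Real.exp_pos _).le
  have hαeq : (∑ i, Real.exp ⟪q, K i⟫) = A + B := (Finset.sum_add_sum_compl R _).symm
  have hαpos : 0 < A + B := by linarith
  -- Lower bound on A via Jensen
  have hSR : β₁ * ‖q‖ * Real.log n ≤ (R.card : ℝ)⁻¹ * ∑ i ∈ R, ⟪q, K i⟫ := by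
    by_cases hq : ‖q‖ = 0
    · have hq0 : q = 0 := norm_eq_zero.mp hq
      simp [hq0, hq]
    · have hqpos : 0 < ‖q‖ := lt_of_le_of_ne (norm_nonneg _) (Ne.symm hq)
      have h1' := mul_le_mul_of_nonneg_right h1 (norm_nonneg q)
      have heq : ((n : ℝ) ^ γ * ‖q‖)⁻¹ * (∑ i ∈ R, ⟪q, K i⟫) * ‖q‖
          = ((n : ℝ) ^ γ)⁻¹ * ∑ i ∈ R, ⟪q, K i⟫ := by
        field_simp
      rw [heq] at h1'
      rw [hR]
      nlinarith [h1']
  have jensen : Real.exp (∑ i ∈ R, (R.card : ℝ)⁻¹ * ⟪q, K i⟫)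
      ≤ ∑ i ∈ R, (R.card : ℝ)⁻¹ * Real.exp ⟪q, K i⟫ := by
    have := convexOn_exp.map_sum_le (t := R) (w := fun _ => (R.card : ℝ)⁻¹)
      (p := fun i => ⟪q, K i⟫) (fun _ _ => by positivity)
      (by simp [Finset.sum_const, nsmul_eq_mul, mul_inv_cancel₀ hcardne])
      (fun _ _ => Set.mem_univ _)
    simpa [smul_eq_mul] using this
  have hA : (n : ℝ) ^ γ * (n : ℝ) ^ (β₁ * ‖q‖) ≤ A := by
    have h3 : (n : ℝ) ^ (β₁ * ‖q‖) ≤ (R.card : ℝ)⁻¹ * A := by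
      calc (n : ℝ) ^ (β₁ * ‖q‖) = Real.exp (Real.log n * (β₁ * ‖q‖)) :=
            Real.rpow_def_of_pos hn0 _
        _ ≤ Real.exp (∑ i ∈ R, (R.card : ℝ)⁻¹ * ⟪q, K i⟫) := by
            apply Real.exp_le_exp.mpr
            rw [← Finset.mul_sum]
            nlinarith [hSR]
        _ ≤ ∑ i ∈ R, (R.card : ℝ)⁻¹ * Real.exp ⟪q, K i⟫ := jensen
        _ = (R.card : ℝ)⁻¹ * A := by rw [hAdef, Finset.mul_sum]
    have := mul_le_mul_of_nonneg_left h3 hcardpos.le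
    rw [mul_inv_cancel_left₀ hcardne] at this
    rw [← hR]; exact this
  -- Upper bound on B
  have hB : B ≤ (n : ℝ) ^ (1 + β₂ * ‖q‖) := by
    have hterm : ∀ i ∈ Rᶜ, Real.exp ⟪q, K i⟫ ≤ (n : ℝ) ^ (β₂ * ‖q‖) := by
      intro i hi
      have hi' : i ∉ R := Finset.mem_compl.mp hi
      have hx : ⟪q, K i⟫ ≤ β₂ * ‖q‖ * Real.log n := by
        by_cases hq : ‖q‖ = 0
        · have hq0 : q = 0 := norm_eq_zero.mp hq
          simp [hq0, hq]
        · have hqpos : 0 < ‖q‖ := lt_of_le_of_ne (norm_nonneg _) (Ne.symm hq)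
          have := (div_le_iff₀ hqpos).mp (h2 i hi')
          nlinarith [this]
      rw [Real.rpow_def_of_pos hn0]
      exact Real.exp_le_exp.mpr (by nlinarith [hx])
    calc B ≤ ∑ _i ∈ Rᶜ, (n : ℝ) ^ (β₂ * ‖q‖) := Finset.sum_le_sum hterm
      _ = (Rᶜ.card : ℝ) * (n : ℝ) ^ (β₂ * ‖q‖) := by
          rw [Finset.sum_const, nsmul_eq_mul]
      _ ≤ (n : ℝ) * (n : ℝ) ^ (β₂ * ‖q‖) := by
          apply mul_le_mul_of_nonneg_right _ (Real.rpow_pos_of_pos hn0 _).le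
          exact_mod_cast Finset.card_le_card (Finset.subset_univ _) |>.trans
            (le_of_eq (Finset.card_univ.trans (Fintype.card_fin n)))
      _ = (n : ℝ) ^ (1 + β₂ * ‖q‖) := by
          rw [Real.rpow_add hn0, Real.rpow_one]
  -- Sums with V
  set SA := ∑ i ∈ R, Real.exp ⟪q, K i⟫ * V i j with hSAdef
  set SB := ∑ i ∈ Rᶜ, Real.exp ⟪q, K i⟫ * V i j with hSBdef
  have hSeq : (∑ i, Real.exp ⟪q, K i⟫ * V i j) = SA + SB :=
    (Finset.sum_add_sum_compl R _).symm
  have hSA : |SA| ≤ A * M := by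
    calc |SA| ≤ ∑ i ∈ R, |Real.exp ⟪q, K i⟫ * V i j| := Finset.abs_sum_le_sum_abs _ _
      _ ≤ ∑ i ∈ R, Real.exp ⟪q, K i⟫ * M := by
          apply Finset.sum_le_sum
          intro i _
          rw [abs_mul, abs_of_pos (Real.exp_pos _)]
          exact mul_le_mul_of_nonneg_left (hV i j) (Real.exp_pos _).le
      _ = A * M := by rw [hAdef, ← Finset.sum_mul]
  have hSB : |SB| ≤ B * M := by
    calc |SB| ≤ ∑ i ∈ Rᶜ, |Real.exp ⟪q, K i⟫ * V i j| := Finset.abs_sum_le_sum_abs _ _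
      _ ≤ ∑ i ∈ Rᶜ, Real.exp ⟪q, K i⟫ * M := by
          apply Finset.sum_le_sum
          intro i _
          rw [abs_mul, abs_of_pos (Real.exp_pos _)]
          exact mul_le_mul_of_nonneg_left (hV i j) (Real.exp_pos _).le
      _ = B * M := by rw [hBdef, ← Finset.sum_mul]
  -- Main algebraic identity
  have hkey : A⁻¹ * SA - (A + B)⁻¹ * (SA + SB)
      = (B * SA - A * SB) / (A * (A + B)) := by
    field_simp
    ring
  rw [hαeq, hSeq, hkey]
  have hnum : |B * SA - A * SB| ≤ 2 * A * B * M := by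
    have h := abs_sub (B * SA) (A * SB)
    rw [abs_mul, abs_mul, abs_of_nonneg hB0, abs_of_pos hApos] at h
    nlinarith [hSA, hSB, hApos, hB0, abs_nonneg SA, abs_nonneg SB]
  calc |(B * SA - A * SB) / (A * (A + B))|
      = |B * SA - A * SB| / (A * (A + B)) := by
        rw [abs_div, abs_of_pos (by positivity : (0:ℝ) < A * (A + B))]
    _ ≤ 2 * A * B * M / (A * (A + B)) := by gcongr
    _ = 2 * B * M / (A + B) := by
        rw [mul_comm A (A + B)]
        rw [show 2 * A * B * M = (2 * B * M) * A by ring]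
        rw [mul_div_mul_right _ _ (ne_of_gt hApos)]
    _ ≤ 2 * B * M / A := by
        apply div_le_div_of_nonneg_left (by positivity) hApos
        linarith
    _ ≤ 2 * (n : ℝ) ^ (1 + β₂ * ‖q‖) * M / ((n : ℝ) ^ γ * (n : ℝ) ^ (β₁ * ‖q‖)) := by
        apply div_le_div₀ (by positivity) _ (by positivity) hA
        nlinarith [hB, hM0]
    _ = 2 * M / (n : ℝ) ^ (γ + (β₁ - β₂) * ‖q‖ - 1) := by
        have e1 : (n:ℝ) ^ (γ + (β₁ - β₂) * ‖q‖ - 1)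
            = ((n:ℝ) ^ γ * (n:ℝ) ^ (β₁ * ‖q‖)) / (n:ℝ) ^ (1 + β₂ * ‖q‖) := by
          rw [← Real.rpow_add hn0, ← Real.rpow_sub hn0]
          ring_nf
        rw [e1, div_div_eq_mul_div]
        ring
end
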